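/- For every k ≥ 1, the class REGA_k of languages regular with some advice over an advice alphabet of size k is strictly contained in REGA_{k+1}. -/

import Mathlib

open Classical

/-- State of a deterministic transducer after `n` steps: `t` maps (state, input
character) to (next state, output character). -/
def transRun {Q Γ S : Type*} (t : Q → Γ → Q × S) (q : Q) (B : ℕ → Γ) : ℕ → Q
  | 0 => q
  | n + 1 => (t (transRun t q B n) (B n)).1

/-- The `n`-th output character of the transducer on infinite input `B`. -/
def transOut {Q Γ S : Type*} (t : Q → Γ → Q × S) (q : Q) (B : ℕ → Γ) (n : ℕ) : S :=
  (t (transRun t q B n) (B n)).2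

/-- The run of an automaton with advice. -/
def advRun {Q S Γ : Type*} (δ : Q → Γ → S → Q) (A : ℕ → Γ) : Q → ℕ → List S → Q
  | q, _, [] => q
  | q, n, a :: w => advRun δ A (δ q (A n) a) (n + 1) w

/-- The language accepted by an automaton with advice. -/
def advAccepts {Q S Γ : Type*} (δ : Q → Γ → S → Q) (A : ℕ → Γ) (q0 : Q) (F : Set Q) :
    Set (List S) :=
  {w | advRun δ A q0 0 w ∈ F}

/-- `REGA_k` over input alphabet `S`: the languages regular with some advice over
an advice alphabet of size `k`. -/
def REGA (k : ℕ) (S : Type*) : Set (Set (List S)) :=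
  {L | ∃ (A : ℕ → Fin k) (Q : Type) (_ : Fintype Q) (δ : Q → Fin k → S → Q)
        (q0 : Q) (F : Set Q), advAccepts δ A q0 F = L}

/-!
If `Pref A` is accepted by an automaton with advice `B`, let `q n` be its state after reading the
first `n` letters of `A`; then `A n` is the only letter whose reading leads to acceptance. So `A`
is the output of a finite-state transducer reading `B`, and it suffices to find `A` over `k + 1`
letters that no transducer with `k` input letters outputs; `Pref A ∈ REGA (k + 1)` with advice `A`.

Such an `A` exists by the Baire category theorem in the compact space `ℕ → Fin (k + 1)`. There are
countably many transducers, and the set of outputs of one of them is compact and contains no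
cylinder: its prefixes of length `n + m` are determined by the first `n + m` input letters, so at
most `k ^ (n + m)` of the `(k + 1) ^ m` continuations of a prefix of length `n` occur.
-/

open Set

theorem exists_pow_add_lt_pow {a b : ℕ} (hab : a < b) (n : ℕ) : ∃ m, a ^ (n + m) < b ^ m := by
  have hb : (0 : ℝ) < b := by exact_mod_cast (Nat.zero_le a).trans_lt hab
  obtain ⟨m, hm⟩ := exists_pow_lt_of_lt_one (x := ((a : ℝ) ^ n + 1)⁻¹) (y := (a : ℝ) / b)
    (by positivity) (by rw [div_lt_one hb]; exact_mod_cast hab)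
  refine ⟨m, ?_⟩
  rw [div_pow, div_lt_iff₀ (by positivity), ← div_eq_inv_mul, lt_div_iff₀ (by positivity)] at hm
  have : (a : ℝ) ^ (n + m) < b ^ m :=
    calc (a : ℝ) ^ (n + m) ≤ a ^ m * (a ^ n + 1) := by
          rw [pow_add, mul_add, mul_one, mul_comm]
          exact le_add_of_nonneg_right (by positivity)
      _ < b ^ m := hm
  exact_mod_cast this

section Transducer

variable {Q Γ S : Type*} (t : Q → Γ → Q × S) (q : Q)

theorem transRun_congr {B B' : ℕ → Γ} :
    ∀ {n : ℕ}, (∀ i < n, B i = B' i) → transRun t q B n = transRun t q B' n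
  | 0, _ => rfl
  | n + 1, h => by
    simp only [transRun, transRun_congr fun i hi => h i (hi.trans n.lt_succ_self),
      h n n.lt_succ_self]

theorem transOut_congr {B B' : ℕ → Γ} {n : ℕ} (h : ∀ i ≤ n, B i = B' i) :
    transOut t q B n = transOut t q B' n := by
  rw [transOut, transOut, transRun_congr t q fun i hi => h i hi.le, h n le_rfl]

theorem transRun_equiv {Q' : Type*} (e : Q ≃ Q') (B : ℕ → Γ) (n : ℕ) :
    transRun (fun q' g => Prod.map e id (t (e.symm q') g)) (e q) B n = e (transRun t q B n) := by
  induction n with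
  | zero => rfl
  | succ n ih => simp [transRun, ih]

theorem transOut_equiv {Q' : Type*} (e : Q ≃ Q') (B : ℕ → Γ) :
    transOut (fun q' g => Prod.map e id (t (e.symm q') g)) (e q) B = transOut t q B := by
  funext n
  simp [transOut, transRun_equiv]

theorem continuous_transOut [TopologicalSpace Γ] [DiscreteTopology Γ] [TopologicalSpace S] :
    Continuous (transOut t q) := by
  let : TopologicalSpace Q := ⊥
  have : DiscreteTopology Q := ⟨rfl⟩
  have hrun : ∀ n, Continuous fun B : ℕ → Γ => transRun t q B n := by
    intro n
    induction n with
    | zero => exact continuous_const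
    | succ n ih =>
      exact (continuous_of_discreteTopology (f := fun p : Q × Γ => (t p.1 p.2).1)).comp
        (ih.prodMk (continuous_apply n))
  exact continuous_pi fun n =>
    (continuous_of_discreteTopology (f := fun p : Q × Γ => (t p.1 p.2).2)).comp
      ((hrun n).prodMk (continuous_apply n))

theorem isClosed_range_transOut [TopologicalSpace Γ] [DiscreteTopology Γ] [Finite Γ]
    [TopologicalSpace S] [T2Space S] : IsClosed (range (transOut t q)) :=
  (isCompact_range (continuous_transOut t q)).isClosed

theorem not_cylinder_subset_range_transOut [Fintype Γ] [Fintype S]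
    (h : Fintype.card Γ < Fintype.card S) (x : ℕ → S) (n : ℕ) :
    ¬ PiNat.cylinder x n ⊆ range (transOut t q) := by
  intro hsub
  obtain ⟨m, hm⟩ := exists_pow_add_lt_pow h n
  let y : (Fin m → S) → ℕ → S := fun u i =>
    if i < n then x i else if hi : i - n < m then u ⟨i - n, hi⟩ else x i
  have hy : ∀ u (j : Fin m), y u (n + j) = u j := fun u j => by simp [y]
  have hcyl : ∀ u, y u ∈ PiNat.cylinder x n := fun u i hi => by simp [y, hi]
  choose B hB using fun u => hsub (hcyl u)
  have hinj : Function.Injective fun u (i : Fin (n + m)) => B u i := by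
    intro u v huv
    funext j
    have := transOut_congr t q (n := n + j) fun i hi => congrFun huv ⟨i, by omega⟩
    rwa [hB, hB, hy, hy] at this
  have := Fintype.card_le_of_injective _ hinj
  simp only [Fintype.card_fun, Fintype.card_fin] at this
  omega

theorem interior_range_transOut_eq_empty [Fintype Γ] [Fintype S] [TopologicalSpace S]
    [DiscreteTopology S] (h : Fintype.card Γ < Fintype.card S) :
    interior (range (transOut t q)) = ∅ := by
  refine eq_empty_of_forall_notMem fun x hx => ?_
  obtain ⟨-, ⟨y, n, rfl⟩, -, hsub⟩ :=
    (PiNat.isTopologicalBasis_cylinders _).exists_subset_of_mem_open hx isOpen_interior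
  exact not_cylinder_subset_range_transOut t q h y n (hsub.trans interior_subset)

end Transducer

theorem exists_forall_transOut_ne {Γ S : Type*} [Fintype Γ] [Fintype S]
    (h : Fintype.card Γ < Fintype.card S) :
    ∃ A : ℕ → S, ∀ (Q : Type*) [Finite Q] (t : Q → Γ → Q × S) (q : Q) (B : ℕ → Γ),
      transOut t q B ≠ A := by
  let : TopologicalSpace Γ := ⊥
  have : DiscreteTopology Γ := ⟨rfl⟩
  let : TopologicalSpace S := ⊥
  have : DiscreteTopology S := ⟨rfl⟩
  have : Nonempty S := Fintype.card_pos_iff.mp (by omega)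
  by_contra! hcover
  have hU : ⋃ T : Σ m : ℕ, (Fin m → Γ → Fin m × S) × Fin m, range (transOut T.2.1 T.2.2) =
      univ := by
    refine eq_univ_of_forall fun A => ?_
    obtain ⟨Q, _, t, q, B, rfl⟩ := hcover A
    obtain ⟨m, ⟨e⟩⟩ := Finite.exists_equiv_fin Q
    exact mem_iUnion.2 ⟨⟨m, _, e q⟩, B, transOut_equiv t q e B⟩
  obtain ⟨T, hT⟩ :=
    nonempty_interior_of_iUnion_of_closed (fun T => isClosed_range_transOut _ _) hU
  exact hT.ne_empty (interior_range_transOut_eq_empty _ _ h)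

section Advice

variable {Q Γ S : Type*}

theorem advRun_append (δ : Q → Γ → S → Q) (A : ℕ → Γ) :
    ∀ (w v : List S) (q : Q) (n : ℕ),
      advRun δ A q n (w ++ v) = advRun δ A (advRun δ A q n w) (n + w.length) v
  | [], v, q, n => rfl
  | a :: w, v, q, n => by
    simp only [List.cons_append, advRun, advRun_append δ A w v, List.length_cons]
    rw [Nat.add_right_comm, Nat.add_assoc]

theorem advRun_comp {Γ' : Type*} (δ : Q → Γ → S → Q) (f : Γ' → Γ) (A : ℕ → Γ') :
    advRun (fun q g => δ q (f g)) A = advRun δ (f ∘ A) := by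
  funext q n w
  induction w generalizing q n with
  | nil => rfl
  | cons a w ih => exact ih _ _

theorem REGA_monotone (S : Type*) : Monotone fun k => REGA k S := by
  rintro k l hkl L ⟨A, Q, _, δ, q₀, F, rfl⟩
  -- off the image of `Fin.castLE` any letter will do, such as `A 0`
  let r : Fin l → Fin k := fun g => if h : (g : ℕ) < k then ⟨g, h⟩ else A 0
  have hr : r ∘ Fin.castLE hkl ∘ A = A := funext fun n => by simp [r]
  refine ⟨Fin.castLE hkl ∘ A, Q, ‹_›, fun q g => δ q (r g), q₀, F, ?_⟩
  simp only [advAccepts, advRun_comp, hr]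

def Pref (A : ℕ → S) : Set (List S) :=
  range fun n => (List.range n).map A

theorem map_range_append_singleton_mem_pref (A : ℕ → S) (n : ℕ) (s : S) :
    (List.range n).map A ++ [s] ∈ Pref A ↔ s = A n := by
  constructor
  · rintro ⟨m, hm⟩
    obtain rfl : m = n + 1 := by simpa using congrArg List.length hm
    simpa [List.range_succ] using hm.symm
  · rintro rfl
    exact ⟨n + 1, by simp [List.range_succ]⟩

def matchAdvice [DecidableEq S] (b : Bool) (g s : S) : Bool :=
  b && decide (s = g)

theorem advRun_matchAdvice [DecidableEq S] (A : ℕ → S) : ∀ (w : List S) (b : Bool) (n : ℕ),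
    advRun matchAdvice A b n w = (b && decide (w = (List.range' n w.length).map A))
  | [], b, n => by simp [advRun]
  | a :: w, b, n => by
    simp [advRun, advRun_matchAdvice A w, matchAdvice, List.range'_succ, Bool.and_assoc]

theorem advAccepts_matchAdvice [DecidableEq S] (A : ℕ → S) :
    advAccepts matchAdvice A true {true} = Pref A := by
  ext w
  simp only [advAccepts, advRun_matchAdvice, Pref, mem_ofPred_eq, mem_singleton_iff, mem_range,
    Bool.true_and, decide_eq_true_eq, ← List.range_eq_range']
  exact ⟨fun h => ⟨_, h.symm⟩, by rintro ⟨n, rfl⟩; simp⟩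

theorem pref_mem_REGA {k : ℕ} (A : ℕ → Fin k) : Pref A ∈ REGA k (Fin k) :=
  ⟨A, Bool, inferInstance, matchAdvice, true, {true}, advAccepts_matchAdvice A⟩

theorem exists_transOut_eq_of_advAccepts_eq_pref {δ : Q → Γ → S → Q} {B : ℕ → Γ} {q₀ : Q}
    {F : Set Q} {A : ℕ → S} (h : advAccepts δ B q₀ F = Pref A) :
    ∃ t : Q → Γ → Q × S, transOut t q₀ B = A := by
  let state : ℕ → Q := fun n => advRun δ B q₀ 0 ((List.range n).map A)
  have hstep : ∀ n s, advRun δ B q₀ 0 ((List.range n).map A ++ [s]) = δ (state n) (B n) s := by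
    intro n s
    rw [advRun_append, List.length_map, List.length_range, Nat.zero_add]
    rfl
  have hacc : ∀ n s, δ (state n) (B n) s ∈ F ↔ s = A n := by
    intro n s
    rw [← hstep, ← map_range_append_singleton_mem_pref, ← h]
    rfl
  have : Nonempty S := ⟨A 0⟩
  -- output the unique letter whose reading keeps the automaton accepting
  let out : Q → Γ → S := fun q g => Classical.epsilon fun s => δ q g s ∈ F
  have hout : ∀ n, out (state n) (B n) = A n := fun n =>
    (hacc n _).1 <| Classical.epsilon_spec (p := fun s => δ (state n) (B n) s ∈ F)
      ⟨A n, (hacc n _).2 rfl⟩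
  refine ⟨fun q g => (δ q g (out q g), out q g), ?_⟩
  have hrun : ∀ n, transRun (fun q g => (δ q g (out q g), out q g)) q₀ B n = state n := by
    intro n
    induction n with
    | zero => rfl
    | succ n ih =>
      simp only [transRun, ih, hout]
      rw [← hstep, ← List.map_singleton, ← List.map_append, ← List.range_succ]
  funext n
  simp only [transOut, hrun, hout]

end Advice

theorem REGA_strict_hierarchy_general (k : ℕ) :
    REGA k (Fin (k + 1)) ⊂ REGA (k + 1) (Fin (k + 1)) := by
  obtain ⟨A, hA⟩ := exists_forall_transOut_ne (Γ := Fin k) (S := Fin (k + 1)) (by simp)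
  refine (ssubset_iff_of_subset (REGA_monotone _ k.le_succ)).2 ⟨Pref A, pref_mem_REGA A, ?_⟩
  rintro ⟨B, Q, _, δ, q₀, F, hL⟩
  obtain ⟨t, ht⟩ := exists_transOut_eq_of_advAccepts_eq_pref hL
  exact hA Q t q₀ B ht

/-- For every `k ≥ 1`, `REGA_k` is strictly contained in `REGA_{k+1}`. -/
theorem REGA_strict_hierarchy (k : ℕ) (hk : 1 ≤ k) :
    REGA k (Fin (k + 1)) ⊂ REGA (k + 1) (Fin (k + 1)) :=
  REGA_strict_hierarchy_general k
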